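/- Let D be a positive self-adjoint operator with compact resolvent on a separable Hilbert space, with eigenvalues D_j > 0 and orthonormal eigenbasis (φ_j), and let K be a self-adjoint Hilbert–Schmidt operator. Then (8/π) ∫₀^∞ Tr( D(D²+t²)⁻² K D(D²+t²)⁻¹ K ) t² dt = Σ_{i,j} |⟨φ_i, K φ_j⟩|² · 2D_i/(D_i+D_j)² ≤ (1/2) Tr(K D⁻¹ K). -/

import Mathlib

/-!
In the eigenbasis of `D` both traces are double sums of `|⟨eᵢ, K eⱼ⟩|²` against scalar weights
depending on `(Dᵢ, Dⱼ)`. Each term of the integrand is nonnegative with integral at most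
`π / (16 c) · |⟨eᵢ, K eⱼ⟩|²`, so by the Hilbert–Schmidt condition sum and integral may be
exchanged, and everything reduces to the scalar integral `∫₀^∞ b t² / (b² + t²)² · a / (a² + t²) dt = π a / (4 (a + b)²)`. It is computed
from an explicit primitive built from `arctan (t / a)`, `arctan (t / b)` and `t / (t² + b²)ᵏ`
(partial fractions in `t²`, with a separate primitive when `a = b`). The inequality is termwise
AM–GM: `4 a b ≤ (a + b)²`.
-/

open MeasureTheory Real Filter Topology
open scoped InnerProductSpace

lemma hasDerivAt_arctan_div {a : ℝ} (ha : a ≠ 0) (t : ℝ) :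
    HasDerivAt (fun s => arctan (s / a)) (a / (a ^ 2 + t ^ 2)) t := by
  refine ((hasDerivAt_arctan (t / a)).comp t ((hasDerivAt_id t).div_const a)).congr_deriv ?_
  field_simp

lemma tendsto_arctan_div_atTop {a : ℝ} (ha : 0 < a) :
    Tendsto (fun t => arctan (t / a)) atTop (𝓝 (π / 2)) :=
  (tendsto_nhds_of_tendsto_nhdsWithin tendsto_arctan_atTop).comp
    (tendsto_id.atTop_div_const ha)

lemma hasDerivAt_div_sq_add_sq_pow {b : ℝ} (hb : b ≠ 0) (k : ℕ) (t : ℝ) :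
    HasDerivAt (fun s => s / (s ^ 2 + b ^ 2) ^ k)
      ((t ^ 2 + b ^ 2 - 2 * k * t ^ 2) / (t ^ 2 + b ^ 2) ^ (k + 1)) t := by
  have hpos : 0 < t ^ 2 + b ^ 2 := by positivity
  have hden : HasDerivAt (fun s => (s ^ 2 + b ^ 2) ^ k)
      (k * (t ^ 2 + b ^ 2) ^ (k - 1) * (2 * t)) t := by
    simpa using ((hasDerivAt_pow 2 t).add_const (b ^ 2)).fun_pow k
  refine ((hasDerivAt_id t).div hden (by positivity)).congr_deriv ?_
  rcases k with _ | k
  · simp [hpos.ne']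
  · simp only [id, Nat.add_sub_cancel]
    field_simp
    push_cast
    ring

lemma tendsto_div_sq_add_sq_pow_atTop (b : ℝ) {k : ℕ} (hk : k ≠ 0) :
    Tendsto (fun t : ℝ => t / (t ^ 2 + b ^ 2) ^ k) atTop (𝓝 0) := by
  refine squeeze_zero' ?_ ?_ tendsto_inv_atTop_zero
  · filter_upwards [eventually_ge_atTop 0] with t ht
    positivity
  · filter_upwards [eventually_ge_atTop 1] with t ht
    calc t / (t ^ 2 + b ^ 2) ^ k ≤ t / t ^ 2 := by
          gcongr
          calc t ^ 2 ≤ t ^ 2 + b ^ 2 := le_add_of_nonneg_right (sq_nonneg b)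
            _ ≤ (t ^ 2 + b ^ 2) ^ k := le_self_pow₀ (by nlinarith) hk
      _ = t⁻¹ := by field_simp

noncomputable def bogoliubovIntegrand (a b t : ℝ) : ℝ :=
  b / (b ^ 2 + t ^ 2) ^ 2 * (a / (a ^ 2 + t ^ 2)) * t ^ 2

lemma bogoliubovIntegrand_nonneg {a b : ℝ} (ha : 0 ≤ a) (hb : 0 ≤ b) (t : ℝ) :
    0 ≤ bogoliubovIntegrand a b t := by
  unfold bogoliubovIntegrand
  positivity

lemma exists_primitive_bogoliubovIntegrand_self {a : ℝ} (ha : 0 < a) :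
    ∃ F : ℝ → ℝ, (∀ t, HasDerivAt F (bogoliubovIntegrand a a t) t) ∧
      Tendsto F atTop (𝓝 (π / 8 * (2 * a / (a + a) ^ 2))) ∧ F 0 = 0 := by
  refine ⟨fun t => t / (t ^ 2 + a ^ 2) ^ 1 / 8 + arctan (t / a) / (8 * a)
      - a ^ 2 / 4 * (t / (t ^ 2 + a ^ 2) ^ 2), fun t => ?_, ?_, by simp⟩
  · refine ((((hasDerivAt_div_sq_add_sq_pow ha.ne' 1 t).div_const 8).add
      ((hasDerivAt_arctan_div ha.ne' t).div_const (8 * a))).sub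
      ((hasDerivAt_div_sq_add_sq_pow ha.ne' 2 t).const_mul (a ^ 2 / 4))).congr_deriv ?_
    unfold bogoliubovIntegrand
    rw [add_comm (a ^ 2) (t ^ 2)]
    field_simp
    ring
  · have h := ((((tendsto_div_sq_add_sq_pow_atTop a one_ne_zero).div_const 8).add
      ((tendsto_arctan_div_atTop ha).div_const (8 * a))).sub
      ((tendsto_div_sq_add_sq_pow_atTop a two_ne_zero).const_mul (a ^ 2 / 4)))
    convert h using 2
    field_simp
    ring

lemma exists_primitive_bogoliubovIntegrand_of_ne {a b : ℝ} (ha : 0 < a) (hb : 0 < b)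
    (hab : a ≠ b) :
    ∃ F : ℝ → ℝ, (∀ t, HasDerivAt F (bogoliubovIntegrand a b t) t) ∧
      Tendsto F atTop (𝓝 (π / 8 * (2 * a / (a + b) ^ 2))) ∧ F 0 = 0 := by
  have hba : b ^ 2 - a ^ 2 ≠ 0 := by
    rw [sq_sub_sq]
    exact mul_ne_zero (by positivity) (sub_ne_zero.mpr hab.symm)
  set c₁ := -a ^ 2 * b / (b ^ 2 - a ^ 2) ^ 2 with hc₁
  set c₂ := a ^ 3 / (b ^ 2 - a ^ 2) ^ 2 + a / (2 * (b ^ 2 - a ^ 2)) with hc₂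
  set c₃ := a * b / (2 * (b ^ 2 - a ^ 2)) with hc₃
  refine ⟨fun t => c₁ * arctan (t / a) + c₂ * arctan (t / b) + c₃ * (t / (t ^ 2 + b ^ 2) ^ 1),
    fun t => ?_, ?_, by simp⟩
  · refine ((((hasDerivAt_arctan_div ha.ne' t).const_mul c₁).add
      ((hasDerivAt_arctan_div hb.ne' t).const_mul c₂)).add
      ((hasDerivAt_div_sq_add_sq_pow hb.ne' 1 t).const_mul c₃)).congr_deriv ?_
    unfold bogoliubovIntegrand
    rw [add_comm (a ^ 2) (t ^ 2), add_comm (b ^ 2) (t ^ 2), hc₁, hc₂, hc₃]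
    field_simp
    ring
  · have h := (((tendsto_arctan_div_atTop ha).const_mul c₁).add
      ((tendsto_arctan_div_atTop hb).const_mul c₂)).add
      ((tendsto_div_sq_add_sq_pow_atTop b one_ne_zero).const_mul c₃)
    convert h using 2
    rw [hc₁, hc₂]
    field_simp
    ring

lemma exists_primitive_bogoliubovIntegrand {a b : ℝ} (ha : 0 < a) (hb : 0 < b) :
    ∃ F : ℝ → ℝ, (∀ t, HasDerivAt F (bogoliubovIntegrand a b t) t) ∧
      Tendsto F atTop (𝓝 (π / 8 * (2 * a / (a + b) ^ 2))) ∧ F 0 = 0 := by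
  rcases eq_or_ne a b with rfl | hab
  exacts [exists_primitive_bogoliubovIntegrand_self ha,
    exists_primitive_bogoliubovIntegrand_of_ne ha hb hab]

lemma integrableOn_bogoliubovIntegrand {a b : ℝ} (ha : 0 < a) (hb : 0 < b) :
    IntegrableOn (bogoliubovIntegrand a b) (Set.Ioi 0) := by
  obtain ⟨F, hF, hlim, -⟩ := exists_primitive_bogoliubovIntegrand ha hb
  exact integrableOn_Ioi_deriv_of_nonneg' (fun t _ => hF t)
    (fun t _ => bogoliubovIntegrand_nonneg ha.le hb.le t) hlim

lemma integral_bogoliubovIntegrand {a b : ℝ} (ha : 0 < a) (hb : 0 < b) :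
    ∫ t in Set.Ioi 0, bogoliubovIntegrand a b t = π / 8 * (2 * a / (a + b) ^ 2) := by
  obtain ⟨F, hF, hlim, hF0⟩ := exists_primitive_bogoliubovIntegrand ha hb
  rw [integral_Ioi_of_hasDerivAt_of_nonneg' (fun t _ => hF t)
    (fun t _ => bogoliubovIntegrand_nonneg ha.le hb.le t) hlim, hF0, sub_zero]

lemma two_mul_div_add_sq_le {a b : ℝ} (ha : 0 ≤ a) (hb : 0 < b) :
    2 * a / (a + b) ^ 2 ≤ 1 / (2 * b) := by
  rw [div_le_div_iff₀ (by positivity) (by positivity)]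
  nlinarith [sq_nonneg (a - b)]

lemma Summable.mul_of_nonneg_of_le_const {ι : Type*} {w f : ι → ℝ} {M : ℝ} (hw : Summable w)
    (hw0 : ∀ i, 0 ≤ w i) (hf0 : ∀ i, 0 ≤ f i) (hfM : ∀ i, f i ≤ M) :
    Summable fun i => w i * f i :=
  (hw.mul_right M).of_nonneg_of_le (fun i => mul_nonneg (hw0 i) (hf0 i))
    (fun i => mul_le_mul_of_nonneg_left (hfM i) (hw0 i))

lemma integral_tsum_mul_of_integral_le {α ι : Type*} [MeasurableSpace α] [Countable ι]
    {μ : Measure α} {w : ι → ℝ} {g : ι → α → ℝ} {M : ℝ} (hw : Summable w) (hw0 : ∀ i, 0 ≤ w i)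
    (hg0 : ∀ i x, 0 ≤ g i x) (hg : ∀ i, Integrable (g i) μ) (hM : ∀ i, ∫ x, g i x ∂μ ≤ M) :
    ∫ x, ∑' i, w i * g i x ∂μ = ∑' i, w i * ∫ x, g i x ∂μ := by
  have hnorm : ∀ i, ∫ x, ‖w i * g i x‖ ∂μ = w i * ∫ x, g i x ∂μ := fun i => by
    rw [← integral_const_mul]
    simp only [Real.norm_of_nonneg (mul_nonneg (hw0 i) (hg0 i _))]
  rw [← integral_tsum_of_summable_integral_norm (fun i => (hg i).const_mul (w i))]
  · simp only [integral_const_mul]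
  · simp only [hnorm]
    exact hw.mul_of_nonneg_of_le_const hw0 (fun i => integral_nonneg (hg0 i)) hM

theorem stmt_19_general {𝓗 : Type*} [NormedAddCommGroup 𝓗] [InnerProductSpace ℂ 𝓗]
    (e : HilbertBasis ℕ ℂ 𝓗) (Dj : ℕ → ℝ) (c : ℝ) (hc : 0 < c) (hD : ∀ j, c ≤ Dj j)
    (K : 𝓗 →L[ℂ] 𝓗)
    (hHS : Summable (fun p : ℕ × ℕ => ‖⟪e p.1, K (e p.2)⟫_ℂ‖ ^ 2)) :
    (8 / π) * (∫ t in Set.Ioi (0 : ℝ),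
        ∑' p : ℕ × ℕ, ‖⟪e p.1, K (e p.2)⟫_ℂ‖ ^ 2 *
          (Dj p.2 / (Dj p.2 ^ 2 + t ^ 2) ^ 2) * (Dj p.1 / (Dj p.1 ^ 2 + t ^ 2)) * t ^ 2) =
      (∑' p : ℕ × ℕ, ‖⟪e p.1, K (e p.2)⟫_ℂ‖ ^ 2 * (2 * Dj p.1 / (Dj p.1 + Dj p.2) ^ 2)) ∧
    (∑' p : ℕ × ℕ, ‖⟪e p.1, K (e p.2)⟫_ℂ‖ ^ 2 * (2 * Dj p.1 / (Dj p.1 + Dj p.2) ^ 2)) ≤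
      (1 / 2) * ∑' p : ℕ × ℕ, ‖⟪e p.1, K (e p.2)⟫_ℂ‖ ^ 2 / Dj p.2 := by
  set w : ℕ × ℕ → ℝ := fun p => ‖⟪e p.1, K (e p.2)⟫_ℂ‖ ^ 2
  have hw0 : ∀ p, 0 ≤ w p := fun p => sq_nonneg _
  have hDpos : ∀ j, 0 < Dj j := fun j => hc.trans_le (hD j)
  have hweight_nonneg : ∀ p : ℕ × ℕ, 0 ≤ 2 * Dj p.1 / (Dj p.1 + Dj p.2) ^ 2 :=
    fun p => div_nonneg (mul_nonneg zero_le_two (hDpos p.1).le) (sq_nonneg _)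
  have hweight_le : ∀ p : ℕ × ℕ, 2 * Dj p.1 / (Dj p.1 + Dj p.2) ^ 2 ≤ 1 / (2 * Dj p.2) :=
    fun p => two_mul_div_add_sq_le (hDpos p.1).le (hDpos p.2)
  have hinv_le : ∀ p : ℕ × ℕ, 1 / (2 * Dj p.2) ≤ 1 / (2 * c) := fun p => by
    gcongr
    exact hD p.2
  constructor
  · calc (8 / π) * ∫ t in Set.Ioi 0, ∑' p : ℕ × ℕ, w p *
          (Dj p.2 / (Dj p.2 ^ 2 + t ^ 2) ^ 2) * (Dj p.1 / (Dj p.1 ^ 2 + t ^ 2)) * t ^ 2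
        = (8 / π) * ∫ t in Set.Ioi 0, ∑' p : ℕ × ℕ,
            w p * bogoliubovIntegrand (Dj p.1) (Dj p.2) t := by
          simp only [bogoliubovIntegrand, mul_assoc]
      _ = (8 / π) * ∑' p : ℕ × ℕ, w p * (π / 8 * (2 * Dj p.1 / (Dj p.1 + Dj p.2) ^ 2)) := by
          rw [integral_tsum_mul_of_integral_le hHS hw0
            (fun p => bogoliubovIntegrand_nonneg (hDpos p.1).le (hDpos p.2).le)
            (fun p => integrableOn_bogoliubovIntegrand (hDpos p.1) (hDpos p.2))
            (M := π / 8 * (1 / (2 * c))) fun p => ?_]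
          · simp only [integral_bogoliubovIntegrand (hDpos _) (hDpos _)]
          · rw [integral_bogoliubovIntegrand (hDpos p.1) (hDpos p.2)]
            exact mul_le_mul_of_nonneg_left ((hweight_le p).trans (hinv_le p)) (by positivity)
      _ = ∑' p : ℕ × ℕ, w p * (2 * Dj p.1 / (Dj p.1 + Dj p.2) ^ 2) := by
          rw [← tsum_mul_left]
          refine tsum_congr fun p => ?_
          field_simp
  · calc ∑' p : ℕ × ℕ, w p * (2 * Dj p.1 / (Dj p.1 + Dj p.2) ^ 2)
        ≤ ∑' p : ℕ × ℕ, w p * (1 / (2 * Dj p.2)) :=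
          (hHS.mul_of_nonneg_of_le_const hw0 hweight_nonneg
            fun p => (hweight_le p).trans (hinv_le p)).tsum_le_tsum
            (fun p => mul_le_mul_of_nonneg_left (hweight_le p) (hw0 p))
            (hHS.mul_of_nonneg_of_le_const hw0 (fun p => by have := hDpos p.2; positivity) hinv_le)
      _ = (1 / 2) * ∑' p : ℕ × ℕ, w p / Dj p.2 := by
          rw [← tsum_mul_left]
          exact tsum_congr fun p => by ring

/-- Trace computation for the second-order Bogoliubov term. `D` is a positive self-adjoint
operator with compact resolvent, represented by its spectral data: an orthonormal
eigenbasis `(e j)` with eigenvalues `Dj j ≥ c > 0`; `K` is a self-adjoint Hilbert–Schmidt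
operator. All traces are written out in the eigenbasis of `D`:
`(8/π) ∫₀^∞ Tr(D(D²+t²)⁻² K D(D²+t²)⁻¹ K) t² dt
  = Σ_{i,j} |⟨eᵢ, K eⱼ⟩|² · 2Dᵢ/(Dᵢ+Dⱼ)² ≤ (1/2) Tr(K D⁻¹ K)`. -/
theorem stmt_19 {𝓗 : Type*} [NormedAddCommGroup 𝓗] [InnerProductSpace ℂ 𝓗] [CompleteSpace 𝓗]
    (e : HilbertBasis ℕ ℂ 𝓗) (Dj : ℕ → ℝ) (c : ℝ) (hc : 0 < c) (hD : ∀ j, c ≤ Dj j)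
    (K : 𝓗 →L[ℂ] 𝓗) (hK : IsSelfAdjoint K)
    (hHS : Summable (fun p : ℕ × ℕ => ‖⟪e p.1, K (e p.2)⟫_ℂ‖ ^ 2)) :
    (8 / π) * (∫ t in Set.Ioi (0 : ℝ),
        ∑' p : ℕ × ℕ, ‖⟪e p.1, K (e p.2)⟫_ℂ‖ ^ 2 *
          (Dj p.2 / (Dj p.2 ^ 2 + t ^ 2) ^ 2) * (Dj p.1 / (Dj p.1 ^ 2 + t ^ 2)) * t ^ 2) =
      (∑' p : ℕ × ℕ, ‖⟪e p.1, K (e p.2)⟫_ℂ‖ ^ 2 * (2 * Dj p.1 / (Dj p.1 + Dj p.2) ^ 2)) ∧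
    (∑' p : ℕ × ℕ, ‖⟪e p.1, K (e p.2)⟫_ℂ‖ ^ 2 * (2 * Dj p.1 / (Dj p.1 + Dj p.2) ^ 2)) ≤
      (1 / 2) * ∑' p : ℕ × ℕ, ‖⟪e p.1, K (e p.2)⟫_ℂ‖ ^ 2 / Dj p.2 :=
  stmt_19_general e Dj c hc hD K hHS
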